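/- arXiv:1309.6073 — 2 statements merged into one kernel-verified Lean document; each statement's English description precedes it below -/
import Mathlib

section
/- Let y = Φ x_S + e' where supp(x_S) ⊆ S with |S| = s, and let z_p minimize ‖y − Φz‖₂ over z with supp(z) ⊆ T where |T| = t. If δ_{s+t} < 1, then ‖x_S − z_p‖₂ ≤ √(1/(1 − δ_{s+t}²))·‖(x_S)_{T̄}‖₂ + (√(1+δ_t)/(1 − δ_{s+t}))·‖e'‖₂, where T̄ is the complement of T. -/
open Finset Matrix

noncomputable def euclNorm {n : ℕ} (x : Fin n → ℝ) : ℝ := Real.sqrt (∑ i, (x i)^2)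

def restrict {n : ℕ} (U : Finset (Fin n)) (x : Fin n → ℝ) : Fin n → ℝ :=
  fun i => if i ∈ U then x i else 0

def sparse {n : ℕ} (s : ℕ) (x : Fin n → ℝ) : Prop :=
  ∃ S : Finset (Fin n), S.card ≤ s ∧ ∀ i ∉ S, x i = 0

noncomputable def supp {n : ℕ} (x : Fin n → ℝ) : Finset (Fin n) := Finset.univ.filter (fun i => x i ≠ 0)

def RIP {m N : ℕ} (Φ : Matrix (Fin m) (Fin N) ℝ) (s : ℕ) (δ : ℝ) : Prop :=
  ∀ x : Fin N → ℝ, sparse s x →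
    (1 - δ) * (euclNorm x)^2 ≤ (euclNorm (Φ.mulVec x))^2 ∧
    (euclNorm (Φ.mulVec x))^2 ≤ (1 + δ) * (euclNorm x)^2

/-!
Write `w = x_S - z_p`. As `z_p` vanishes off `T`, `‖w‖² = ‖(x_S)_{T̄}‖² + ‖w_T‖²`. The residual
`Φ w + e'` of the least-squares problem is orthogonal to `Φ w_T`, so
`‖w_T‖² = ⟨w_T, w⟩ - ⟨Φ w_T, Φ w⟩ - ⟨Φ w_T, e'⟩`. Polarizing the RIP on the `(s+t)`-sparse span of
`w_T` and `w` bounds the first difference by `δ_{s+t} ‖w_T‖ ‖w‖`, and Cauchy–Schwarz with the RIP of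
order `t` bounds the last term by `√(1+δ_t) ‖w_T‖ ‖e'‖`. Hence
`‖w_T‖ ≤ δ_{s+t} ‖w‖ + √(1+δ_t) ‖e'‖`, and solving the resulting quadratic inequality for `‖w‖`
gives the bound.
-/

open RealInnerProductSpace WithLp

section InnerProductSpace

variable {E F : Type*} [NormedAddCommGroup E] [InnerProductSpace ℝ E]
  [NormedAddCommGroup F] [InnerProductSpace ℝ F]

theorem real_inner_eq_zero_of_forall_norm_le_norm_sub_smul {r v : F}
    (h : ∀ t : ℝ, ‖r‖ ≤ ‖r - t • v‖) : ⟪r, v⟫ = 0 := by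
  rcases eq_or_ne v 0 with rfl | hv
  · exact inner_zero_right r
  have hv2 : 0 < ‖v‖ ^ 2 := by positivity
  -- `t = ⟪r, v⟫ / ‖v‖²` minimises `‖r - t • v‖`
  have key := pow_le_pow_left₀ (norm_nonneg r) (h (⟪r, v⟫ / ‖v‖ ^ 2)) 2
  rw [norm_sub_sq_real, real_inner_smul_right, norm_smul, mul_pow, Real.norm_eq_abs,
    sq_abs] at key
  have hsq : ⟪r, v⟫ ^ 2 / ‖v‖ ^ 2 ≤ 0 := by
    have : (⟪r, v⟫ / ‖v‖ ^ 2) ^ 2 * ‖v‖ ^ 2 = ⟪r, v⟫ / ‖v‖ ^ 2 * ⟪r, v⟫ := by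
      field_simp
    rw [this, div_mul_eq_mul_div, ← sq] at key
    linarith
  rw [div_le_iff₀ hv2, zero_mul] at hsq
  exact pow_eq_zero_iff two_ne_zero |>.mp (le_antisymm hsq (sq_nonneg _))

theorem abs_inner_map_sub_inner_le (f : E →ₗ[ℝ] F) {δ : ℝ} {a b : E}
    (h : ∀ α β : ℝ, |‖f (α • a + β • b)‖ ^ 2 - ‖α • a + β • b‖ ^ 2| ≤ δ * ‖α • a + β • b‖ ^ 2) :
    |⟪f a, f b⟫ - ⟪a, b⟫| ≤ δ * ‖a‖ * ‖b‖ := by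
  rcases eq_or_ne a 0 with rfl | ha
  · simp
  rcases eq_or_ne b 0 with rfl | hb
  · simp
  have hab : 0 < ‖a‖ * ‖b‖ := by positivity
  -- polarize with `‖b‖ • a ± ‖a‖ • b`, whose squared norms add up to `4 ‖a‖² ‖b‖²`
  have hp := abs_le.mp (h ‖b‖ ‖a‖)
  have hq := abs_le.mp (h ‖b‖ (-‖a‖))
  simp only [map_add, map_smul, norm_add_sq_real, norm_smul, real_inner_smul_left,
    real_inner_smul_right, Real.norm_eq_abs, abs_neg, abs_norm, mul_pow] at hp hq
  rw [abs_le]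
  constructor <;> nlinarith

end InnerProductSpace

theorem le_sqrt_one_div_mul_add_div_of_sq_le {δ A B C : ℝ} (hδ0 : 0 ≤ δ) (hδ1 : δ < 1)
    (hB : 0 ≤ B) (hC : 0 ≤ C) (h : A ^ 2 ≤ B ^ 2 + (δ * A + C) ^ 2) :
    A ≤ √(1 / (1 - δ ^ 2)) * B + C / (1 - δ) := by
  have hd : 0 < 1 - δ ^ 2 := by nlinarith
  set u := √(1 - δ ^ 2) with hu
  have hu0 : 0 < u := Real.sqrt_pos.mpr hd
  have hu2 : u ^ 2 = 1 - δ ^ 2 := Real.sq_sqrt hd.le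
  have hmain : (1 - δ ^ 2) * A ≤ u * B + (1 + δ) * C := by
    -- otherwise squaring `u B + C < (1 - δ²) A - δ C` contradicts `(1 - δ²) • h`
    by_contra! hlt
    have hP : u * B + C < (1 - δ ^ 2) * A - δ * C := by linarith
    have h' : (1 - δ ^ 2) * ((1 - δ ^ 2) * A ^ 2 - 2 * δ * A * C) ≤ (1 - δ ^ 2) * (B ^ 2 + C ^ 2) :=
      mul_le_mul_of_nonneg_left (by nlinarith) hd.le
    nlinarith [mul_lt_mul'' hP hP (by positivity) (by positivity),
      mul_nonneg (mul_nonneg hu0.le hB) hC]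
  have h1 : 1 - δ ≠ 0 := by linarith
  calc A ≤ (u * B + (1 + δ) * C) / (1 - δ ^ 2) := by rw [le_div_iff₀ hd]; linarith
    _ = √(1 / (1 - δ ^ 2)) * B + C / (1 - δ) := by
      rw [one_div, Real.sqrt_inv, ← hu, ← hu2]
      field_simp
      linear_combination -C * hu2

section Coordinates

variable {n : ℕ}

theorem euclNorm_eq_norm (x : Fin n → ℝ) : euclNorm x = ‖toLp 2 x‖ := by
  simp [euclNorm, EuclideanSpace.norm_eq]

theorem dotProduct_eq_inner (x y : Fin n → ℝ) : x ⬝ᵥ y = ⟪toLp 2 x, toLp 2 y⟫ := by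
  rw [EuclideanSpace.inner_toLp_toLp, star_trivial, dotProduct_comm]

theorem euclNorm_nonneg (x : Fin n → ℝ) : 0 ≤ euclNorm x := Real.sqrt_nonneg _

theorem euclNorm_sq (x : Fin n → ℝ) : euclNorm x ^ 2 = x ⬝ᵥ x := by
  rw [euclNorm_eq_norm, dotProduct_eq_inner, real_inner_self_eq_norm_sq]

theorem abs_dotProduct_le (x y : Fin n → ℝ) : |x ⬝ᵥ y| ≤ euclNorm x * euclNorm y := by
  rw [dotProduct_eq_inner, euclNorm_eq_norm, euclNorm_eq_norm]
  exact abs_real_inner_le_norm _ _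

theorem euclNorm_sq_eq_restrict_compl_add_restrict (U : Finset (Fin n)) (x : Fin n → ℝ) :
    euclNorm x ^ 2 = euclNorm (_root_.restrict Uᶜ x) ^ 2 + euclNorm (_root_.restrict U x) ^ 2 := by
  simp only [euclNorm_sq, dotProduct, ← sum_add_distrib]
  refine sum_congr rfl fun i _ => ?_
  by_cases hi : i ∈ U <;> simp [_root_.restrict, hi]

theorem restrict_dotProduct_self (U : Finset (Fin n)) (x : Fin n → ℝ) :
    _root_.restrict U x ⬝ᵥ x = euclNorm (_root_.restrict U x) ^ 2 := by
  rw [euclNorm_sq]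
  refine sum_congr rfl fun i _ => ?_
  by_cases hi : i ∈ U <;> simp [_root_.restrict, hi]

end Coordinates

namespace RIP

variable {m N k : ℕ} {Φ : Matrix (Fin m) (Fin N) ℝ} {δ : ℝ}

theorem abs_sq_sub_le (h : RIP Φ k δ) {x : Fin N → ℝ} (hx : sparse k x) :
    |euclNorm (Φ *ᵥ x) ^ 2 - euclNorm x ^ 2| ≤ δ * euclNorm x ^ 2 := by
  obtain ⟨hlo, hhi⟩ := h x hx
  rw [abs_le]
  constructor <;> linarith

theorem nonneg (h : RIP Φ k δ) {x : Fin N → ℝ} (hx : sparse k x) (hx0 : x ≠ 0) : 0 ≤ δ := by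
  have hpos : 0 < euclNorm x ^ 2 := by
    rw [euclNorm_eq_norm]
    exact pow_pos (norm_pos_iff.mpr fun h0 => hx0 (congrArg ofLp h0)) 2
  exact nonneg_of_mul_nonneg_left ((abs_nonneg _).trans (h.abs_sq_sub_le hx)) hpos

theorem euclNorm_mulVec_le (h : RIP Φ k δ) {x : Fin N → ℝ} (hx : sparse k x) :
    euclNorm (Φ *ᵥ x) ≤ √(1 + δ) * euclNorm x := by
  rw [← Real.sqrt_sq (euclNorm_nonneg (Φ *ᵥ x)), ← Real.sqrt_sq (euclNorm_nonneg x),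
    ← Real.sqrt_mul' _ (sq_nonneg _)]
  exact Real.sqrt_le_sqrt (h x hx).2

theorem abs_dotProduct_mulVec_sub_le (h : RIP Φ k δ) {a b : Fin N → ℝ}
    (hab : ∀ α β : ℝ, sparse k (α • a + β • b)) :
    |(Φ *ᵥ a) ⬝ᵥ (Φ *ᵥ b) - a ⬝ᵥ b| ≤ δ * euclNorm a * euclNorm b := by
  simp only [dotProduct_eq_inner, euclNorm_eq_norm]
  refine abs_inner_map_sub_inner_le (Matrix.toLpLin 2 2 Φ) fun α β => ?_
  simpa only [← toLp_smul, ← toLp_add, toLpLin_toLp, toLin'_apply, euclNorm_eq_norm]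
    using h.abs_sq_sub_le (hab α β)

end RIP

theorem dotProduct_mulVec_eq_zero_of_forall_euclNorm_le {m N : ℕ} (Φ : Matrix (Fin m) (Fin N) ℝ)
    (T : Finset (Fin N)) (y : Fin m → ℝ) (zp : Fin N → ℝ) (hzp : ∀ i ∉ T, zp i = 0)
    (hmin : ∀ z : Fin N → ℝ, (∀ i ∉ T, z i = 0) → euclNorm (y - Φ *ᵥ zp) ≤ euclNorm (y - Φ *ᵥ z))
    {u : Fin N → ℝ} (hu : ∀ i ∉ T, u i = 0) :
    (y - Φ *ᵥ zp) ⬝ᵥ (Φ *ᵥ u) = 0 := by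
  rw [dotProduct_eq_inner]
  refine real_inner_eq_zero_of_forall_norm_le_norm_sub_smul fun t => ?_
  have h := hmin (zp + t • u) fun i hi => by simp [hzp i hi, hu i hi]
  rwa [mulVec_add, mulVec_smul, ← sub_sub, euclNorm_eq_norm, euclNorm_eq_norm, toLp_sub,
    toLp_sub, toLp_smul] at h

theorem euclNorm_restrict_sub_le {m N : ℕ} (Φ : Matrix (Fin m) (Fin N) ℝ) {s t : ℕ} {δst δt : ℝ}
    (hst : RIP Φ (s + t) δst) (ht : RIP Φ t δt) (hδ0 : 0 ≤ δst)
    {S T : Finset (Fin N)} (hS : #S ≤ s) (hT : #T ≤ t)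
    {xS : Fin N → ℝ} (hxS : ∀ i ∉ S, xS i = 0) {e' y : Fin m → ℝ} (hy : y = Φ *ᵥ xS + e')
    {zp : Fin N → ℝ} (hzp : ∀ i ∉ T, zp i = 0)
    (hmin : ∀ z : Fin N → ℝ, (∀ i ∉ T, z i = 0) → euclNorm (y - Φ *ᵥ zp) ≤ euclNorm (y - Φ *ᵥ z)) :
    euclNorm (_root_.restrict T (xS - zp)) ≤
      δst * euclNorm (xS - zp) + √(1 + δt) * euclNorm e' := by
  set w := xS - zp
  set wT := _root_.restrict T w
  have hwT : ∀ i ∉ T, wT i = 0 := fun i hi => if_neg hi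
  have hsp : ∀ α β : ℝ, sparse (s + t) (α • wT + β • w) := fun α β =>
    ⟨S ∪ T, (card_union_le S T).trans (add_le_add hS hT), fun i hi => by
      rw [mem_union, not_or] at hi
      simp [wT, w, _root_.restrict, hxS i hi.1, hzp i hi.2]⟩
  have horth : (Φ *ᵥ w + e') ⬝ᵥ (Φ *ᵥ wT) = 0 := by
    have h := dotProduct_mulVec_eq_zero_of_forall_euclNorm_le Φ T y zp hzp hmin hwT
    rwa [hy, add_sub_right_comm, ← mulVec_sub] at h
  have hnear := (abs_le.mp (hst.abs_dotProduct_mulVec_sub_le hsp)).1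
  have hnoise : |(Φ *ᵥ wT) ⬝ᵥ e'| ≤ √(1 + δt) * euclNorm wT * euclNorm e' :=
    (abs_dotProduct_le _ _).trans <| mul_le_mul_of_nonneg_right
      (ht.euclNorm_mulVec_le ⟨T, hT, hwT⟩) (euclNorm_nonneg e')
  have hsq : euclNorm wT ^ 2 ≤ (δst * euclNorm w + √(1 + δt) * euclNorm e') * euclNorm wT := by
    rw [← restrict_dotProduct_self, ← sub_zero (wT ⬝ᵥ w), ← horth, add_dotProduct,
      dotProduct_comm _ (Φ *ᵥ wT), dotProduct_comm e']
    linarith [(abs_le.mp hnoise).1]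
  have hR : 0 ≤ δst * euclNorm w + √(1 + δt) * euclNorm e' := by
    have := euclNorm_nonneg w; have := euclNorm_nonneg e'; positivity
  nlinarith [euclNorm_nonneg wT]

theorem stmt8 {m N : ℕ} (Φ : Matrix (Fin m) (Fin N) ℝ) (s t : ℕ) (δst δt : ℝ)
    (hst : RIP Φ (s+t) δst) (ht : RIP Φ t δt) (hδ : δst < 1)
    (S T : Finset (Fin N)) (hS : S.card = s) (hT : T.card = t)
    (xS : Fin N → ℝ) (hxS : ∀ i ∉ S, xS i = 0)
    (e' y : Fin m → ℝ) (hy : y = fun i => Φ.mulVec xS i + e' i)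
    (zp : Fin N → ℝ) (hzp : ∀ i ∉ T, zp i = 0)
    (hmin : ∀ z : Fin N → ℝ, (∀ i ∉ T, z i = 0) →
      euclNorm (fun i => y i - Φ.mulVec zp i) ≤ euclNorm (fun i => y i - Φ.mulVec z i)) :
    euclNorm (fun i => xS i - zp i) ≤
      Real.sqrt (1/(1-δst^2)) * euclNorm (restrict Tᶜ xS) +
      (Real.sqrt (1+δt)/(1-δst)) * euclNorm e' := by
  change euclNorm (xS - zp) ≤ _
  rw [div_mul_eq_mul_div]
  -- the RIP forces `0 ≤ δst` only through a nonzero sparse vector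
  rcases eq_or_ne (xS - zp) 0 with hw | hw
  · have := euclNorm_nonneg (_root_.restrict Tᶜ xS)
    have := euclNorm_nonneg e'
    have : 0 < 1 - δst := sub_pos.mpr hδ
    rw [hw, show euclNorm (0 : Fin N → ℝ) = 0 by simp [euclNorm]]
    positivity
  have hδ0 : 0 ≤ δst := hst.nonneg ⟨S ∪ T, (card_union_le S T).trans (by omega), fun i hi => by
    rw [mem_union, not_or] at hi
    simp [hxS i hi.1, hzp i hi.2]⟩ hw
  have hK := euclNorm_restrict_sub_le Φ hst ht hδ0 hS.le hT.le hxS hy hzp hmin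
  have hcompl : _root_.restrict Tᶜ (xS - zp) = _root_.restrict Tᶜ xS := by
    ext i
    by_cases hi : i ∈ T <;> simp [_root_.restrict, hi, hzp]
  have hpyth := euclNorm_sq_eq_restrict_compl_add_restrict T (xS - zp)
  rw [hcompl] at hpyth
  refine le_sqrt_one_div_mul_add_div_of_sq_le hδ0 hδ (euclNorm_nonneg _)
    (mul_nonneg (Real.sqrt_nonneg _) (euclNorm_nonneg _)) ?_
  rw [hpyth]
  gcongr
  exact euclNorm_nonneg _
end

section
/- One SP iteration contraction: suppose real numbers A := ‖x_S − x^{n−1}‖₂, B := ‖(x_S)_{complement of S̃^n}‖₂, C := ‖x_S − x̃^n‖₂, D := ‖(x_S)_{S_∇}‖₂, E := ‖(x_S)_{complement of S^n}‖₂, F := ‖x_S − x^n‖₂, e := ‖e'‖₂ and δ := δ_{3s} ∈ [0,1) satisfy: B ≤ √2·δ·A + √(2(1+δ))·e; C ≤ √(1/(1−δ²))·B + (√(1+δ)/(1−δ))·e; D ≤ √2·δ·C + √(2(1+δ))·e; E² = D² + B²; F ≤ √(1/(1−δ²))·E + (√(1+δ)/(1−δ))·e. Then F ≤ ρ·A +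 (1−ρ)·τ·e with ρ = √(2δ²(1+δ²))/(1−δ²) and (1−ρ)τ = √(2δ²/(1−δ²))·((√(2(1−δ))+√(1+δ))/(1−δ)) + (2√(2(1−δ))+√(1+δ))/(1−δ). -/
open Finset Matrix

/-! Substituting each bound into the next gives `D ≤ p g B + (p v + b) e` and then, by the
chaining inequality, `E ≤ √((p g)² + 1) B + (p v + b) e`; finally `F` is bounded linearly in `A`
and `e` through `B ≤ p A + b e`. Here `p = √2 δ`, `g = 1 / √(1 - δ²)`, `v = √(1 + δ) / (1 - δ)`
and `b = √(2 (1 + δ))`. For these values the coefficient of `A` is exactly `ρ`, and the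
coefficient of `e` is at most the stated one because `√((p g)² + 1) ≤ p g + 1`. -/

theorem sq_add_sq_le_sq_sqrt_sq_add_sq_mul_add {a b c d x y : ℝ} (hb : 0 ≤ b) (hd : 0 ≤ d)
    (hx : 0 ≤ x) (hy : 0 ≤ y) :
    (a * x + b * y) ^ 2 + (c * x + d * y) ^ 2 ≤ (√(a ^ 2 + c ^ 2) * x + (b + d) * y) ^ 2 := by
  set s := √(a ^ 2 + c ^ 2)
  have hs : s ^ 2 = a ^ 2 + c ^ 2 := Real.sq_sqrt (by positivity)
  have has : 0 ≤ s - a := sub_nonneg.2 (Real.le_sqrt_of_sq_le (by nlinarith))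
  have hcs : 0 ≤ s - c := sub_nonneg.2 (Real.le_sqrt_of_sq_le (by nlinarith))
  have hgap : (s * x + (b + d) * y) ^ 2 - ((a * x + b * y) ^ 2 + (c * x + d * y) ^ 2)
      = 2 * ((s - a) * b * (x * y) + (s - c) * d * (x * y) + b * d * (y * y)) := by
    linear_combination x ^ 2 * hs
  have : 0 ≤ (s - a) * b * (x * y) + (s - c) * d * (x * y) + b * d * (y * y) := by positivity
  linarith

theorem le_of_chained_bounds {p g v b A B C D E F e : ℝ} (hp : 0 ≤ p) (hg : 0 ≤ g)
    (hv : 0 ≤ v) (hb : 0 ≤ b) (hB0 : 0 ≤ B) (hD0 : 0 ≤ D) (he : 0 ≤ e)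
    (hB : B ≤ p * A + b * e) (hC : C ≤ g * B + v * e) (hD : D ≤ p * C + b * e)
    (hE : E ^ 2 = D ^ 2 + B ^ 2) (hF : F ≤ g * E + v * e) :
    F ≤ g * √((p * g) ^ 2 + 1) * p * A
      + (g * √((p * g) ^ 2 + 1) * b + g * (p * v + b) + v) * e := by
  set r := √((p * g) ^ 2 + 1)
  have hD' : D ≤ p * g * B + (p * v + b) * e := by
    nlinarith [mul_le_mul_of_nonneg_left hC hp]
  have hE' : E ≤ r * B + (p * v + b) * e := by
    refine le_of_sq_le_sq ?_ (by positivity)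
    calc E ^ 2 = D ^ 2 + B ^ 2 := hE
      _ ≤ (p * g * B + (p * v + b) * e) ^ 2 + (1 * B + 0 * e) ^ 2 := by gcongr; simp
      _ ≤ (√((p * g) ^ 2 + 1 ^ 2) * B + ((p * v + b) + 0) * e) ^ 2 :=
        sq_add_sq_le_sq_sqrt_sq_add_sq_mul_add (by positivity) le_rfl hB0 he
      _ = (r * B + (p * v + b) * e) ^ 2 := by simp [r]
  have hr : 0 ≤ r := Real.sqrt_nonneg _
  calc F ≤ g * E + v * e := hF
    _ ≤ g * (r * B + (p * v + b) * e) + v * e := by gcongr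
    _ ≤ g * (r * (p * A + b * e) + (p * v + b) * e) + v * e := by gcongr
    _ = g * r * p * A + (g * r * b + g * (p * v + b) + v) * e := by ring

theorem sqrt_sq_add_one_le_add_one {x : ℝ} (hx : 0 ≤ x) : √(x ^ 2 + 1) ≤ x + 1 :=
  Real.sqrt_le_iff.2 ⟨by positivity, by nlinarith⟩

section Coefficients

variable {δ : ℝ} (hδ0 : 0 ≤ δ) (hδ1 : δ < 1)
include hδ0 hδ1

theorem sqrt_two_mul_mul_sqrt_one_div_one_sub_sq :
    √2 * δ * √(1 / (1 - δ ^ 2)) = √(2 * δ ^ 2 / (1 - δ ^ 2)) := by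
  have h : 0 < 1 - δ ^ 2 := by nlinarith
  rw [← pow_left_inj₀ (by positivity) (by positivity) two_ne_zero, mul_pow, mul_pow,
    Real.sq_sqrt zero_le_two, Real.sq_sqrt (by positivity), Real.sq_sqrt (by positivity)]
  field_simp

theorem sqrt_one_div_one_sub_sq_mul_sqrt_two_mul_one_add :
    √(1 / (1 - δ ^ 2)) * √(2 * (1 + δ)) = √(2 * (1 - δ)) / (1 - δ) := by
  have h : 0 < 1 - δ := by linarith
  have h' : 0 < 1 - δ ^ 2 := by nlinarith
  rw [← pow_left_inj₀ (by positivity) (by positivity) two_ne_zero, mul_pow, div_pow,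
    Real.sq_sqrt (by positivity), Real.sq_sqrt (by positivity), Real.sq_sqrt (by positivity)]
  field_simp
  ring

theorem sqrt_one_div_one_sub_sq_mul_sqrt_sq_add_one_mul_sqrt_two_mul :
    √(1 / (1 - δ ^ 2)) * √(√(2 * δ ^ 2 / (1 - δ ^ 2)) ^ 2 + 1) * (√2 * δ)
      = √(2 * δ ^ 2 * (1 + δ ^ 2)) / (1 - δ ^ 2) := by
  have h : 0 < 1 - δ ^ 2 := by nlinarith
  rw [← pow_left_inj₀ (by positivity) (by positivity) two_ne_zero, mul_pow, mul_pow, mul_pow,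
    div_pow, Real.sq_sqrt (by positivity), Real.sq_sqrt (by positivity),
    Real.sq_sqrt (by positivity), Real.sq_sqrt (by positivity),
    Real.sq_sqrt (show (0 : ℝ) ≤ 2 * δ ^ 2 * (1 + δ ^ 2) by positivity)]
  field_simp
  ring

theorem noise_coeff_le :
    √(1 / (1 - δ ^ 2)) * √(√(2 * δ ^ 2 / (1 - δ ^ 2)) ^ 2 + 1) * √(2 * (1 + δ))
        + √(1 / (1 - δ ^ 2)) * (√2 * δ * (√(1 + δ) / (1 - δ)) + √(2 * (1 + δ)))
        + √(1 + δ) / (1 - δ)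
      ≤ √(2 * δ ^ 2 / (1 - δ ^ 2)) * ((√(2 * (1 - δ)) + √(1 + δ)) / (1 - δ))
        + (2 * √(2 * (1 - δ)) + √(1 + δ)) / (1 - δ) := by
  have hgp : √(1 / (1 - δ ^ 2)) * (√2 * δ) = √(2 * δ ^ 2 / (1 - δ ^ 2)) := by
    rw [← sqrt_two_mul_mul_sqrt_one_div_one_sub_sq hδ0 hδ1]; ring
  have hgb := sqrt_one_div_one_sub_sq_mul_sqrt_two_mul_one_add hδ0 hδ1
  set g := √(1 / (1 - δ ^ 2))
  set P := √(2 * δ ^ 2 / (1 - δ ^ 2))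
  set v := √(1 + δ) / (1 - δ)
  have hr : g * √(P ^ 2 + 1) * √(2 * (1 + δ))
      ≤ (P + 1) * (√(2 * (1 - δ)) / (1 - δ)) := by
    rw [mul_right_comm, hgb, mul_comm]
    have : 0 ≤ 1 - δ := by linarith
    exact mul_le_mul_of_nonneg_right (sqrt_sq_add_one_le_add_one (Real.sqrt_nonneg _))
      (by positivity)
  calc _ ≤ (P + 1) * (√(2 * (1 - δ)) / (1 - δ))
        + (g * (√2 * δ) * v + g * √(2 * (1 + δ))) + v := by linarith
    _ = _ := by rw [hgp, hgb]; ring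

end Coefficients

theorem stmt14_general (A B C D E F e δ : ℝ)
    (hB0 : 0 ≤ B) (hD0 : 0 ≤ D)
    (he : 0 ≤ e) (hδ0 : 0 ≤ δ) (hδ1 : δ < 1)
    (hB : B ≤ Real.sqrt 2 * δ * A + Real.sqrt (2*(1+δ)) * e)
    (hC : C ≤ Real.sqrt (1/(1-δ^2)) * B + (Real.sqrt (1+δ)/(1-δ)) * e)
    (hD : D ≤ Real.sqrt 2 * δ * C + Real.sqrt (2*(1+δ)) * e)
    (hE : E^2 = D^2 + B^2)
    (hF : F ≤ Real.sqrt (1/(1-δ^2)) * E + (Real.sqrt (1+δ)/(1-δ)) * e) :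
    F ≤ (Real.sqrt (2*δ^2*(1+δ^2))/(1-δ^2)) * A +
      (Real.sqrt (2*δ^2/(1-δ^2)) * ((Real.sqrt (2*(1-δ)) + Real.sqrt (1+δ))/(1-δ)) +
       (2*Real.sqrt (2*(1-δ)) + Real.sqrt (1+δ))/(1-δ)) * e := by
  have h := le_of_chained_bounds (by positivity) (Real.sqrt_nonneg _) (by positivity)
    (Real.sqrt_nonneg _) hB0 hD0 he hB hC hD hE hF
  rw [sqrt_two_mul_mul_sqrt_one_div_one_sub_sq hδ0 hδ1,
    sqrt_one_div_one_sub_sq_mul_sqrt_sq_add_one_mul_sqrt_two_mul hδ0 hδ1] at h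
  have := mul_le_mul_of_nonneg_right (noise_coeff_le hδ0 hδ1) he
  linarith

theorem stmt14 (A B C D E F e δ : ℝ)
    (hA : 0 ≤ A) (hB0 : 0 ≤ B) (hC0 : 0 ≤ C) (hD0 : 0 ≤ D) (hE0 : 0 ≤ E)
    (hF0 : 0 ≤ F) (he : 0 ≤ e) (hδ0 : 0 ≤ δ) (hδ1 : δ < 1)
    (hB : B ≤ Real.sqrt 2 * δ * A + Real.sqrt (2*(1+δ)) * e)
    (hC : C ≤ Real.sqrt (1/(1-δ^2)) * B + (Real.sqrt (1+δ)/(1-δ)) * e)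
    (hD : D ≤ Real.sqrt 2 * δ * C + Real.sqrt (2*(1+δ)) * e)
    (hE : E^2 = D^2 + B^2)
    (hF : F ≤ Real.sqrt (1/(1-δ^2)) * E + (Real.sqrt (1+δ)/(1-δ)) * e) :
    F ≤ (Real.sqrt (2*δ^2*(1+δ^2))/(1-δ^2)) * A +
      (Real.sqrt (2*δ^2/(1-δ^2)) * ((Real.sqrt (2*(1-δ)) + Real.sqrt (1+δ))/(1-δ)) +
       (2*Real.sqrt (2*(1-δ)) + Real.sqrt (1+δ))/(1-δ)) * e :=
  stmt14_general A B C D E F e δ hB0 hD0 he hδ0 hδ1 hB hC hD hE hF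
end
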